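/- arXiv:2206.06532 — 3 statements merged into one kernel-verified Lean document; each statement's English description precedes it below -/
import Mathlib

section
/- Let κ > 0, λ > 0 with λ³ > (27/4)κ, and g(Q) = 1 - λ²Q + 2λκQ² - κ²Q³. Then there exist Q₋, Q₊ with 0 < Q₋ < λ/(3κ) < Q₊ < λ/κ such that g(Q₋) = 0 and g(Q₊) = 0. -/
/-! Writing `g Q = 1 - Q (λ - κ Q)²` shows `g 0 = g (λ/κ) = 1`, while at the critical point
`g (λ/(3κ)) = 1 - 4λ³/(27κ) < 0`; the intermediate value theorem gives a root on each side. -/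

open Set

theorem exists_zero_mem_Ioo_of_pos_neg_pos {f : ℝ → ℝ} {a c b : ℝ} (hac : a ≤ c) (hcb : c ≤ b)
    (hf : ContinuousOn f (Icc a b)) (ha : 0 < f a) (hc : f c < 0) (hb : 0 < f b) :
    (∃ x ∈ Ioo a c, f x = 0) ∧ ∃ x ∈ Ioo c b, f x = 0 :=
  ⟨intermediate_value_Ioo' hac (hf.mono (Icc_subset_Icc_right hcb)) ⟨hc, ha⟩,
    intermediate_value_Ioo hcb (hf.mono (Icc_subset_Icc_left hac)) ⟨hc, hb⟩⟩

theorem stmt_2 (κ l : ℝ) (hκ : 0 < κ) (hl : 0 < l) (h : 27/4 * κ < l^3)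
    (g : ℝ → ℝ) (hg : ∀ Q, g Q = 1 - l^2 * Q + 2 * l * κ * Q^2 - κ^2 * Q^3) :
    ∃ Qm Qp : ℝ, 0 < Qm ∧ Qm < l / (3 * κ) ∧ l / (3 * κ) < Qp ∧ Qp < l / κ ∧
      g Qm = 0 ∧ g Qp = 0 := by
  have hg' : ∀ Q, g Q = 1 - Q * (l - κ * Q) ^ 2 := fun Q => by rw [hg]; ring
  have hcont : Continuous g := by
    rw [funext hg']
    fun_prop
  have hmid_pos : 0 < l / (3 * κ) := by positivity
  have hmid_lt : l / (3 * κ) < l / κ := div_lt_div_of_pos_left hl hκ (by linarith)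
  have hg_mid : g (l / (3 * κ)) < 0 := by
    have : g (l / (3 * κ)) = 1 - 4 * l ^ 3 / (27 * κ) := by
      rw [hg']
      field_simp
      ring
    rw [this, sub_neg, lt_div_iff₀ (by positivity)]
    linarith
  have hg_end : g (l / κ) = 1 := by
    rw [hg', mul_div_cancel₀ l hκ.ne']
    ring
  obtain ⟨⟨Qm, hQm, hQm0⟩, ⟨Qp, hQp, hQp0⟩⟩ :=
    exists_zero_mem_Ioo_of_pos_neg_pos hmid_pos.le hmid_lt.le hcont.continuousOn
      (by simp [hg']) hg_mid (by simp [hg_end])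
  exact ⟨Qm, Qp, hQm.1, hQm.2, hQp.1, hQp.2, hQm0, hQp0⟩
end

section
/- With the quadratic pencil 𝔏(σ) = -σ² + 2ΩσJ⋆ + L (L ≥ 0 self-adjoint, J⋆ bounded self-adjoint), if σ ∈ ϱ(𝔏) then ‖𝔏(σ)⁻¹‖ ≥ 1/(d(2(|σ|+|Ω|)+d)) where d = dist(σ, σ(𝔏)) is the distance from σ to the spectrum of the pencil, provided σ(𝔏) is nonempty. -/
/-!
If `𝔏 σ` has the bounded inverse `T` and `‖T‖ ‖𝔏 μ - 𝔏 σ‖ < 1`, then `𝔏 μ = 𝔏 σ (1 + T (𝔏 μ - 𝔏 σ))`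
is boundedly invertible by a Neumann series. Only the bounded part of the pencil depends on the
spectral parameter, and `‖𝔏 μ - 𝔏 σ‖ ≤ r (2 (|σ| + |Ω|) + r)` with `r = |σ - μ|`; hence every point
`μ` of the spectrum satisfies `1 ≤ ‖T‖ r (2 (|σ| + |Ω|) + r)`, and this closed condition passes to
the infimum `r = dist(σ, σ(𝔏))`.
-/

open Metric

theorem exists_bounded_inverse_of_perturbation {𝕜 E : Type*} [NontriviallyNormedField 𝕜]
    [NormedAddCommGroup E] [NormedSpace 𝕜 E] [CompleteSpace E]
    {A B : E →ₗ[𝕜] E} {T D : E →L[𝕜] E}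
    (hAT : ∀ f, A (T f) = f) (hTA : ∀ x, T (A x) = x) (hBA : ∀ x, B x = A x + D x)
    (hTD : ‖T‖ * ‖D‖ < 1) :
    ∃ T' : E →L[𝕜] E, (∀ f, B (T' f) = f) ∧ ∀ x, T' (B x) = x := by
  have hsmall : ‖-(T * D)‖ < 1 := by
    rw [norm_neg]
    exact (norm_mul_le T D).trans_lt hTD
  set u := Units.oneSub _ hsmall
  have hu : ∀ x, (u : E →L[𝕜] E) x = x + T (D x) := fun x => by
    simp [u, Units.oneSub]
  refine ⟨(↑u⁻¹ : E →L[𝕜] E) * T, fun f => ?_, fun x => ?_⟩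
  · set g := (↑u⁻¹ : E →L[𝕜] E) (T f)
    have hg : g + T (D g) = T f := by
      rw [← hu, ← mul_apply_eq_comp, u.mul_inv, one_apply_eq_self]
    calc B (((↑u⁻¹ : E →L[𝕜] E) * T) f) = A (g + T (D g)) := by
          rw [mul_apply_eq_comp, hBA, map_add, hAT]
      _ = f := by rw [hg, hAT]
  · rw [mul_apply_eq_comp, hBA, map_add, hTA, ← hu, ← mul_apply_eq_comp,
      u.inv_mul, one_apply_eq_self]

theorem norm_sq_sub_sq_le {R : Type*} [SeminormedCommRing R] (a b : R) :
    ‖a ^ 2 - b ^ 2‖ ≤ dist a b * (2 * ‖a‖ + dist a b) := by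
  have hfactor : a ^ 2 - b ^ 2 = (a - b) * (a + a - (a - b)) := by ring
  rw [hfactor, dist_eq_norm]
  refine (norm_mul_le _ _).trans (mul_le_mul_of_nonneg_left ?_ (norm_nonneg _))
  calc ‖a + a - (a - b)‖ ≤ ‖a + a‖ + ‖a - b‖ := norm_sub_le _ _
    _ ≤ 2 * ‖a‖ + ‖a - b‖ := by linarith [norm_add_le a a]

theorem norm_pencil_sub_le {E : Type*} [NormedAddCommGroup E] [NormedSpace ℂ E]
    {J : E →L[ℂ] E} (hJ : ‖J‖ ≤ 1) (Ω : ℝ) (σ μ : ℂ) :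
    ‖(σ ^ 2 - μ ^ 2) • (1 : E →L[ℂ] E) + (2 * (Ω : ℂ) * (μ - σ)) • J‖
      ≤ dist σ μ * (2 * (‖σ‖ + |Ω|) + dist σ μ) := by
  have hquad : ‖(σ ^ 2 - μ ^ 2) • (1 : E →L[ℂ] E)‖ ≤ dist σ μ * (2 * ‖σ‖ + dist σ μ) :=
    (norm_smul _ _).le.trans <| (mul_le_of_le_one_right (norm_nonneg _)
      ContinuousLinearMap.norm_id_le).trans (norm_sq_sub_sq_le σ μ)
  have hlin : ‖(2 * (Ω : ℂ) * (μ - σ)) • J‖ ≤ 2 * |Ω| * dist σ μ := by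
    refine (norm_smul _ _).le.trans (mul_le_of_le_one_right (norm_nonneg _) hJ) |>.trans_eq ?_
    rw [norm_mul, norm_mul, Complex.norm_real, Real.norm_eq_abs, ← dist_eq_norm, dist_comm]
    norm_num
  calc _ ≤ _ := norm_add_le _ _
    _ ≤ dist σ μ * (2 * ‖σ‖ + dist σ μ) + 2 * |Ω| * dist σ μ := add_le_add hquad hlin
    _ = dist σ μ * (2 * (‖σ‖ + |Ω|) + dist σ μ) := by ring

theorem le_apply_infDist_of_forall_le {α : Type*} [PseudoMetricSpace α] {x : α} {s : Set α}
    (hs : s.Nonempty) {f : ℝ → ℝ} (hf : Continuous f) {a : ℝ}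
    (h : ∀ y ∈ s, a ≤ f (dist x y)) : a ≤ f (infDist x s) := by
  have hmem : infDist x s ∈ closure (Set.range fun y : s => dist x y) := by
    rw [infDist_eq_iInf]
    exact csInf_mem_closure (Set.range_nonempty_iff_nonempty.mpr hs.to_subtype)
      ⟨0, by rintro _ ⟨y, rfl⟩; exact dist_nonneg⟩
  refine closure_minimal ?_ (isClosed_le continuous_const hf) hmem
  rintro _ ⟨y, rfl⟩
  exact h y y.2

theorem stmt_10_general {H : Type*} [NormedAddCommGroup H] [InnerProductSpace ℂ H] [CompleteSpace H]
    (L : H →ₗ[ℂ] H)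
    (J : H →L[ℂ] H)
    (hJ : ‖J‖ ≤ 1) (Ω : ℝ)
    (𝔏 : ℂ → H →ₗ[ℂ] H)
    (h𝔏 : ∀ (σ : ℂ) (ξ : H), 𝔏 σ ξ = -σ^2 • ξ + (2 * (Ω : ℂ) * σ) • J ξ + L ξ)
    (S : Set ℂ)
    (hS : S = {z : ℂ | ¬ ∃ T : H →L[ℂ] H, (∀ f : H, 𝔏 z (T f) = f) ∧ ∀ ξ : H, T (𝔏 z ξ) = ξ})
    (σ : ℂ) (T : H →L[ℂ] H)
    (hT1 : ∀ f : H, 𝔏 σ (T f) = f) (hT2 : ∀ ξ : H, T (𝔏 σ ξ) = ξ) :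
    1 / (Metric.infDist σ S * (2 * (‖σ‖ + |Ω|) + Metric.infDist σ S)) ≤ ‖T‖ := by
  set c := 2 * (‖σ‖ + |Ω|)
  have hspec : ∀ μ ∈ S, 1 ≤ ‖T‖ * (dist σ μ * (c + dist σ μ)) := by
    intro μ hμ
    by_contra! hlt
    have hdiff : ∀ ξ, 𝔏 μ ξ = 𝔏 σ ξ
        + ((σ ^ 2 - μ ^ 2) • (1 : H →L[ℂ] H) + (2 * (Ω : ℂ) * (μ - σ)) • J) ξ := fun ξ => by
      simp only [h𝔏, add_apply, smul_apply,
        one_apply_eq_self]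
      module
    rw [hS] at hμ
    exact hμ <| exists_bounded_inverse_of_perturbation hT1 hT2 hdiff <|
      (mul_le_mul_of_nonneg_left (norm_pencil_sub_le hJ Ω σ μ) (norm_nonneg T)).trans_lt hlt
  rcases le_or_gt (infDist σ S * (c + infDist σ S)) 0 with hle | hpos
  · exact (div_nonpos_of_nonneg_of_nonpos zero_le_one hle).trans (norm_nonneg T)
  have hSne : S.Nonempty := Set.nonempty_iff_ne_empty.mpr fun hempty => by
    simp [hempty] at hpos
  rw [div_le_iff₀ hpos]
  exact le_apply_infDist_of_forall_le (f := fun t => ‖T‖ * (t * (c + t))) hSne (by fun_prop) hspec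

theorem stmt_10 {H : Type*} [NormedAddCommGroup H] [InnerProductSpace ℂ H] [CompleteSpace H]
    (L : H →ₗ[ℂ] H)
    (hsym : ∀ x y : H, (inner ℂ (L x) y : ℂ) = inner ℂ x (L y))
    (hpos : ∀ x : H, 0 ≤ (inner ℂ (L x) x : ℂ).re)
    (J : H →L[ℂ] H) (hJsa : ∀ x y : H, (inner ℂ (J x) y : ℂ) = inner ℂ x (J y))
    (hJ : ‖J‖ ≤ 1) (Ω : ℝ)
    (𝔏 : ℂ → H →ₗ[ℂ] H)
    (h𝔏 : ∀ (σ : ℂ) (ξ : H), 𝔏 σ ξ = -σ^2 • ξ + (2 * (Ω : ℂ) * σ) • J ξ + L ξ)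
    (S : Set ℂ)
    (hS : S = {z : ℂ | ¬ ∃ T : H →L[ℂ] H, (∀ f : H, 𝔏 z (T f) = f) ∧ ∀ ξ : H, T (𝔏 z ξ) = ξ})
    (hSne : S.Nonempty)
    (σ : ℂ) (T : H →L[ℂ] H)
    (hT1 : ∀ f : H, 𝔏 σ (T f) = f) (hT2 : ∀ ξ : H, T (𝔏 σ ξ) = ξ) :
    1 / (Metric.infDist σ S * (2 * (‖σ‖ + |Ω|) + Metric.infDist σ S)) ≤ ‖T‖ :=
  stmt_10_general L J hJ Ω 𝔏 h𝔏 S hS σ T hT1 hT2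
end

section
/- Let (σₙ) be a sequence of complex numbers converging to σ∞, and suppose for each n there exist real numbers bₙ, cₙ with |bₙ| ≤ 2|Ω|, cₙ ≥ 0, such that -σₙ² + bₙσₙ + cₙ → 0 as n → ∞. Then σ∞ is real. -/
/-!
If `σ∞` were not real, then `Im σₙ` stays away from `0`, and the imaginary part
`Im σₙ · (bₙ - 2 Re σₙ)` of the quadratic forces `bₙ → 2 Re σ∞`. The real part then forces
`cₙ → -|σ∞|²`, as for the real quadratic `-(X - σ∞)(X - conj σ∞)`; this is incompatible with
`cₙ ≥ 0`.
-/

open Filter Topology Complex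

lemma im_neg_sq_add_mul_add (z : ℂ) (b c : ℝ) :
    (-z ^ 2 + b * z + c).im = z.im * (b - 2 * z.re) := by
  simp only [add_im, neg_im, sq, mul_im, ofReal_re, ofReal_im]
  ring

lemma re_neg_sq_add_mul_add (z : ℂ) (b c : ℝ) :
    (-z ^ 2 + b * z + c).re = z.im ^ 2 - z.re ^ 2 + b * z.re + c := by
  simp only [add_re, neg_re, sq, mul_re, ofReal_re, ofReal_im]
  ring

section ApproximateRoots

variable {ι : Type*} {l : Filter ι} {σ : ι → ℂ} {z : ℂ} {b c : ι → ℝ}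

lemma tendsto_linear_coeff_of_approx_root (hσ : Tendsto σ l (𝓝 z)) (hz : z.im ≠ 0)
    (h : Tendsto (fun n => -(σ n) ^ 2 + (b n : ℂ) * σ n + (c n : ℂ)) l (𝓝 0)) :
    Tendsto b l (𝓝 (2 * z.re)) := by
  have him : Tendsto (fun n => (σ n).im) l (𝓝 z.im) := (continuous_im.tendsto z).comp hσ
  have hre : Tendsto (fun n => (σ n).re) l (𝓝 z.re) := (continuous_re.tendsto z).comp hσ
  have hq : Tendsto (fun n => (-(σ n) ^ 2 + (b n : ℂ) * σ n + (c n : ℂ)).im) l (𝓝 0) := by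
    simpa only [zero_im, Function.comp_def] using (continuous_im.tendsto 0).comp h
  have hlim := (hre.const_mul 2).add (hq.div him hz)
  rw [zero_div, add_zero] at hlim
  refine hlim.congr' ?_
  filter_upwards [him.eventually_ne hz] with n hn
  rw [Pi.div_apply, im_neg_sq_add_mul_add]
  field_simp
  ring

lemma tendsto_const_coeff_of_approx_root (hσ : Tendsto σ l (𝓝 z)) (hz : z.im ≠ 0)
    (h : Tendsto (fun n => -(σ n) ^ 2 + (b n : ℂ) * σ n + (c n : ℂ)) l (𝓝 0)) :
    Tendsto c l (𝓝 (-normSq z)) := by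
  have him : Tendsto (fun n => (σ n).im) l (𝓝 z.im) := (continuous_im.tendsto z).comp hσ
  have hre : Tendsto (fun n => (σ n).re) l (𝓝 z.re) := (continuous_re.tendsto z).comp hσ
  have hq : Tendsto (fun n => (-(σ n) ^ 2 + (b n : ℂ) * σ n + (c n : ℂ)).re) l (𝓝 0) := by
    simpa only [zero_re, Function.comp_def] using (continuous_re.tendsto 0).comp h
  have hb := tendsto_linear_coeff_of_approx_root hσ hz h
  have hlim := ((hq.sub (him.pow 2)).add (hre.pow 2)).sub (hb.mul hre)
  convert hlim using 1
  · ext n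
    rw [re_neg_sq_add_mul_add]
    ring
  · rw [normSq_apply]
    ring_nf

end ApproximateRoots

theorem stmt_12_general (σ : ℕ → ℂ) (σinf : ℂ) (b c : ℕ → ℝ)
    (hc : ∀ n, 0 ≤ c n)
    (hσ : Filter.Tendsto σ Filter.atTop (nhds σinf))
    (h : Filter.Tendsto (fun n => -(σ n)^2 + (b n : ℂ) * σ n + (c n : ℂ))
      Filter.atTop (nhds 0)) :
    σinf.im = 0 := by
  by_contra hy
  have hnonneg : 0 ≤ -normSq σinf := ge_of_tendsto' (tendsto_const_coeff_of_approx_root hσ hy h) hc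
  have hzero : σinf = 0 := normSq_eq_zero.mp (le_antisymm (by linarith) (normSq_nonneg σinf))
  exact hy (by rw [hzero, zero_im])

theorem stmt_12 (Ω : ℝ) (σ : ℕ → ℂ) (σinf : ℂ) (b c : ℕ → ℝ)
    (hb : ∀ n, |b n| ≤ 2 * |Ω|) (hc : ∀ n, 0 ≤ c n)
    (hσ : Filter.Tendsto σ Filter.atTop (nhds σinf))
    (h : Filter.Tendsto (fun n => -(σ n)^2 + (b n : ℂ) * σ n + (c n : ℂ))
      Filter.atTop (nhds 0)) :
    σinf.im = 0 :=
  stmt_12_general σ σinf b c hc hσ h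
end
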